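/- Let C be Cantor space and F a multifunction from C to C such that F maps compact sets to compact sets and some λ : ℕ → ℕ is a modulus of ℓ-fold Henkin-continuity of F for every ℓ ∈ ℕ. Then F admits a uniformly continuous total selection with modulus λ: there exists G : C → C such that G x ∈ F x for every x ∈ dom F, and for all x, x' ∈ dom F and all m ∈ ℕ, dist x x' ≤ 2^(-λ(m)) implies dist (G x) (G x') ≤ 2^(-m). -/
import Mathlib


/- Cantor space: infinite binary sequences with the metric
`dist x y = 2^(-n)`, `n` the first index where `x` and `y` differ. -/
attribute [local instance] PiNat.metricSpace

/-- `lam : ℕ → ℕ` is a modulus of `ℓ`-fold Henkin-continuity of `F`, via Skolem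
functions `y k` for `k = 0,…,ℓ`, where `y k` depends only on
`m 0,…,m (k-1)` and `x 0,…,x k`. -/
def IsHenkinModulus (ℓ : ℕ) (lam : ℕ → ℕ) (F : (ℕ → Bool) → Set (ℕ → Bool)) : Prop :=
  ∃ y : ℕ → (ℕ → ℕ) → (ℕ → (ℕ → Bool)) → (ℕ → Bool),
    (∀ k, k ≤ ℓ → ∀ m m' x x', (∀ i < k, m i = m' i) → (∀ i ≤ k, x i = x' i) →
      y k m x = y k m' x') ∧
    (∀ (m : ℕ → ℕ) (x : ℕ → (ℕ → Bool)), (∀ k, k ≤ ℓ → (F (x k)).Nonempty) →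
      (∀ k, k < ℓ → dist (x k) (x (k + 1)) ≤ (2 : ℝ) ^ (-(lam (m k) : ℤ))) →
      y 0 m x ∈ F (x 0) ∧
      ∀ k, k < ℓ → y (k + 1) m x ∈ F (x (k + 1)) ∧
        dist (y k m x) (y (k + 1) m x) ≤ (2 : ℝ) ^ (-(m k : ℤ)))

def henkinBval : ℕ → (ℕ → Bool) → ℕ
  | 0, _ => 0
  | ℓ+1, a => 2 * henkinBval ℓ a + cond (a ℓ) 1 0


lemma henkinBval_congr {a b : ℕ → Bool} : ∀ {ℓ : ℕ}, (∀ i < ℓ, a i = b i) →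
    henkinBval ℓ a = henkinBval ℓ b
  | 0, _ => rfl
  | ℓ+1, h => by
    have h1 : henkinBval ℓ a = henkinBval ℓ b :=
      henkinBval_congr (fun i hi => h i (by omega))
    have h2 : a ℓ = b ℓ := h ℓ (by omega)
    simp [henkinBval, h1, h2]

lemma henkinBval_inj {a b : ℕ → Bool} : ∀ {ℓ : ℕ}, henkinBval ℓ a = henkinBval ℓ b →
    ∀ i < ℓ, a i = b i
  | 0, _ => by omega
  | ℓ+1, h => by
    have key : henkinBval ℓ a = henkinBval ℓ b ∧ a ℓ = b ℓ := by
      cases ha : a ℓ <;> cases hb : b ℓ <;>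
        simp only [henkinBval, ha, hb, cond_true, cond_false] at h
      · exact ⟨by omega, rfl⟩
      · exact absurd h (by omega)
      · exact absurd h (by omega)
      · exact ⟨by omega, rfl⟩
    intro i hi
    rcases Nat.lt_succ_iff_lt_or_eq.1 hi with h' | h'
    · exact henkinBval_inj key.1 i h'
    · subst h'; exact key.2

lemma henkinBval_div (a : ℕ → Bool) : ∀ (T ℓ : ℕ), ℓ ≤ T →
    henkinBval T a / 2 ^ (T - ℓ) = henkinBval ℓ a := by
  intro T
  induction T with
  | zero => intro ℓ hℓ; interval_cases ℓ; simp
  | succ n ih =>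
    intro ℓ hℓ
    rcases Nat.eq_or_lt_of_le hℓ with h | h
    · subst h; simp
    · have hℓn : ℓ ≤ n := by omega
      have h1 : n + 1 - ℓ = (n - ℓ) + 1 := by omega
      have h2 : henkinBval (n+1) a = 2 * henkinBval n a + cond (a n) 1 0 := rfl
      rw [h1, h2, pow_succ, mul_comm (2 ^ (n - ℓ)) 2, ← Nat.div_div_eq_div_mul]
      have h3 : (2 * henkinBval n a + cond (a n) 1 0) / 2 = henkinBval n a := by
        cases a n <;> simp <;> omega
      rw [h3, ih ℓ hℓn]

lemma henkinDist_le_iff {x y : ℕ → Bool} {n : ℕ} :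
    dist x y ≤ (2 : ℝ) ^ (-(n : ℤ)) ↔ ∀ i < n, x i = y i := by
  have h : (2 : ℝ) ^ (-(n : ℤ)) = (1 / 2 : ℝ) ^ n := by
    rw [zpow_neg, zpow_natCast, one_div, inv_pow]
  rw [h, ← PiNat.mem_cylinder_iff_dist_le]
  exact PiNat.mem_cylinder_iff

lemma henkinBval_squeeze {T ℓ : ℕ} (hℓT : ℓ ≤ T) {a b c : ℕ → Bool}
    (hab : henkinBval T a ≤ henkinBval T b) (hbc : henkinBval T b ≤ henkinBval T c)
    (hac : ∀ i < ℓ, a i = c i) : ∀ i < ℓ, b i = a i := by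
  have h1 : henkinBval ℓ a ≤ henkinBval ℓ b := by
    rw [← henkinBval_div a T ℓ hℓT, ← henkinBval_div b T ℓ hℓT]
    exact Nat.div_le_div_right hab
  have h2 : henkinBval ℓ b ≤ henkinBval ℓ c := by
    rw [← henkinBval_div b T ℓ hℓT, ← henkinBval_div c T ℓ hℓT]
    exact Nat.div_le_div_right hbc
  have h3 : henkinBval ℓ a = henkinBval ℓ c := henkinBval_congr hac
  have h4 : henkinBval ℓ b = henkinBval ℓ a := by omega
  exact henkinBval_inj h4

open Classical

noncomputable section

def sortedClass (D : Finset (ℕ → Bool)) (L T : ℕ) (x : ℕ → Bool) : List (ℕ → Bool) :=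
  ((D.filter (fun a => ∀ i < L, a i = x i)).toList).mergeSort
    (fun a b => decide (henkinBval T a ≤ henkinBval T b))

def chainOf (D : Finset (ℕ → Bool)) (L T : ℕ) (x : ℕ → Bool) : ℕ → ℕ → Bool :=
  fun j => (sortedClass D L T x).getD j (fun _ => false)

def massignOf (lam : ℕ → ℕ) (D : Finset (ℕ → Bool)) (L T B : ℕ) (x : ℕ → Bool) : ℕ → ℕ :=
  fun j => Nat.findGreatest (fun m => ∀ i < lam m, chainOf D L T x j i = chainOf D L T x (j+1) i) B

variable {F : (ℕ → Bool) → Set (ℕ → Bool)} {lam : ℕ → ℕ}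

def Yfun (hmod : ∀ ℓ : ℕ, IsHenkinModulus ℓ lam F) (D : Finset (ℕ → Bool)) (L T B : ℕ)
    (x : ℕ → Bool) : ℕ → Bool :=
  (hmod ((sortedClass D L T x).length - 1)).choose
    ((sortedClass D L T x).idxOf x) (massignOf lam D L T B x) (chainOf D L T x)

lemma mem_sortedClass_iff {D : Finset (ℕ → Bool)} {L T : ℕ} {x a : ℕ → Bool} :
    a ∈ sortedClass D L T x ↔ a ∈ D ∧ ∀ i < L, a i = x i := by
  simp [sortedClass, Finset.mem_filter]

lemma self_mem_sortedClass {D : Finset (ℕ → Bool)} {L T : ℕ} {x : ℕ → Bool} (hx : x ∈ D) :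
    x ∈ sortedClass D L T x :=
  mem_sortedClass_iff.2 ⟨hx, fun _ _ => rfl⟩

lemma sortedClass_congr {D : Finset (ℕ → Bool)} {L T : ℕ} {x x' : ℕ → Bool}
    (h : ∀ i < L, x i = x' i) : sortedClass D L T x = sortedClass D L T x' := by
  unfold sortedClass
  congr 2
  refine Finset.filter_congr fun a _ => ?_
  constructor
  · intro ha i hi; rw [ha i hi, h i hi]
  · intro ha i hi; rw [ha i hi, ← h i hi]

lemma sortedClass_sorted {D : Finset (ℕ → Bool)} {L T : ℕ} {x : ℕ → Bool} {i j : ℕ}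
    (hi : i < (sortedClass D L T x).length) (hj : j < (sortedClass D L T x).length)
    (hij : i ≤ j) :
    henkinBval T ((sortedClass D L T x)[i]) ≤ henkinBval T ((sortedClass D L T x)[j]) := by
  rcases eq_or_lt_of_le hij with h | h
  · subst h; exact le_rfl
  · have hp : (sortedClass D L T x).Pairwise
        (fun a b => (decide (henkinBval T a ≤ henkinBval T b) : Bool)) := by
      apply List.pairwise_mergeSort
      · intro a b c h1 h2
        simp only [decide_eq_true_iff] at h1 h2 ⊢
        omega
      · intro a b
        simpa using Nat.le_total (henkinBval T a) (henkinBval T b)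
    have := List.pairwise_iff_get.1 hp ⟨i, hi⟩ ⟨j, hj⟩ h
    simpa using this

lemma chainOf_eq {D : Finset (ℕ → Bool)} {L T : ℕ} {x : ℕ → Bool} {j : ℕ}
    (hj : j < (sortedClass D L T x).length) :
    chainOf D L T x j = (sortedClass D L T x)[j] :=
  List.getD_eq_getElem _ _ hj

lemma Yfun_spec (hmod : ∀ ℓ : ℕ, IsHenkinModulus ℓ lam F) {D : Finset (ℕ → Bool)}
    (hD : ∀ a ∈ D, (F a).Nonempty) {L T B : ℕ} (hLB : ∃ m₀, m₀ ≤ B ∧ lam m₀ = L)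
    {x : ℕ → Bool} (hx : x ∈ D) :
    (hmod ((sortedClass D L T x).length - 1)).choose 0 (massignOf lam D L T B x)
        (chainOf D L T x) ∈ F (chainOf D L T x 0) ∧
    ∀ k < (sortedClass D L T x).length - 1,
      (hmod ((sortedClass D L T x).length - 1)).choose (k+1) (massignOf lam D L T B x)
          (chainOf D L T x) ∈ F (chainOf D L T x (k+1)) ∧
      dist ((hmod ((sortedClass D L T x).length - 1)).choose k (massignOf lam D L T B x)
          (chainOf D L T x))
        ((hmod ((sortedClass D L T x).length - 1)).choose (k+1) (massignOf lam D L T B x)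
          (chainOf D L T x)) ≤ (2 : ℝ) ^ (-(massignOf lam D L T B x k : ℤ)) := by
  have hlen : 0 < (sortedClass D L T x).length :=
    List.length_pos_iff.2 (List.ne_nil_of_mem (self_mem_sortedClass hx))
  have chainHyp : ∀ k, k ≤ (sortedClass D L T x).length - 1 →
      (F (chainOf D L T x k)).Nonempty := by
    intro k hk
    have hk' : k < (sortedClass D L T x).length := by omega
    rw [chainOf_eq hk']
    exact hD _ (mem_sortedClass_iff.1 (List.getElem_mem _)).1
  have distHyp : ∀ k, k < (sortedClass D L T x).length - 1 →
      dist (chainOf D L T x k) (chainOf D L T x (k+1)) ≤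
        (2 : ℝ) ^ (-(lam (massignOf lam D L T B x k) : ℤ)) := by
    intro k hk
    have hk1 : k < (sortedClass D L T x).length := by omega
    have hk2 : k + 1 < (sortedClass D L T x).length := by omega
    obtain ⟨m₀, hm₀B, hm₀L⟩ := hLB
    have hagree : ∀ i < L, chainOf D L T x k i = chainOf D L T x (k+1) i := by
      intro i hi
      rw [chainOf_eq hk1, chainOf_eq hk2,
        (mem_sortedClass_iff.1 (List.getElem_mem hk1)).2 i hi,
        (mem_sortedClass_iff.1 (List.getElem_mem hk2)).2 i hi]
    have hP : ∀ i < lam m₀, chainOf D L T x k i = chainOf D L T x (k+1) i := by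
      rw [hm₀L]; exact hagree
    have hGr := Nat.findGreatest_spec (P := fun m =>
      ∀ i < lam m, chainOf D L T x k i = chainOf D L T x (k+1) i) hm₀B hP
    exact henkinDist_le_iff.2 hGr
  exact (hmod ((sortedClass D L T x).length - 1)).choose_spec.2
    (massignOf lam D L T B x) (chainOf D L T x) chainHyp distHyp

lemma Yfun_mem (hmod : ∀ ℓ : ℕ, IsHenkinModulus ℓ lam F) {D : Finset (ℕ → Bool)}
    (hD : ∀ a ∈ D, (F a).Nonempty) {L T B : ℕ} (hLB : ∃ m₀, m₀ ≤ B ∧ lam m₀ = L)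
    {x : ℕ → Bool} (hx : x ∈ D) : Yfun hmod D L T B x ∈ F x := by
  obtain ⟨h0, hsucc⟩ := Yfun_spec hmod hD hLB hx
  have hxl : x ∈ sortedClass D L T x := self_mem_sortedClass hx
  have hidx : (sortedClass D L T x).idxOf x < (sortedClass D L T x).length :=
    List.idxOf_lt_length_iff.2 hxl
  have hget : (sortedClass D L T x)[(sortedClass D L T x).idxOf x] = x :=
    List.getElem_idxOf hidx
  have hY : Yfun hmod D L T B x = (hmod ((sortedClass D L T x).length - 1)).choose
      ((sortedClass D L T x).idxOf x) (massignOf lam D L T B x) (chainOf D L T x) := rfl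
  rcases h : (sortedClass D L T x).idxOf x with _ | k
  · rw [hY, h]
    have : chainOf D L T x 0 = x := by
      rw [chainOf_eq (h ▸ hidx)]
      simpa [h] using hget
    rwa [this] at h0
  · have hk : k < (sortedClass D L T x).length - 1 := by omega
    have := (hsucc k hk).1
    have hc : chainOf D L T x (k+1) = x := by
      rw [chainOf_eq (h ▸ hidx)]
      simpa [h] using hget
    rw [hY, h]
    rwa [hc] at this

lemma Yfun_agree (hmod : ∀ ℓ : ℕ, IsHenkinModulus ℓ lam F) {D : Finset (ℕ → Bool)}
    (hD : ∀ a ∈ D, (F a).Nonempty) {L T B : ℕ} (hLB : ∃ m₀, m₀ ≤ B ∧ lam m₀ = L)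
    (hL : ∀ m ≤ B, L ≤ lam m) (hT : ∀ m ≤ B, lam m ≤ T)
    {x x' : ℕ → Bool} (hx : x ∈ D) (hx' : x' ∈ D) {m : ℕ} (hm : m ≤ B)
    (hxx' : ∀ i < lam m, x i = x' i) :
    ∀ i < m, Yfun hmod D L T B x i = Yfun hmod D L T B x' i := by
  have hLlam : L ≤ lam m := hL m hm
  have hagreeL : ∀ i < L, x' i = x i := fun i hi => (hxx' i (lt_of_lt_of_le hi hLlam)).symm
  have hcls : sortedClass D L T x' = sortedClass D L T x := sortedClass_congr hagreeL
  have spec := Yfun_spec hmod hD (T := T) hLB hx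
  -- the key chain-walking step
  have key : ∀ p q : ℕ, ∀ hp : p < (sortedClass D L T x).length,
      ∀ hq : q < (sortedClass D L T x).length, p ≤ q →
      (∀ i < lam m, (sortedClass D L T x)[p] i = (sortedClass D L T x)[q] i) →
      ∀ i < m,
      (hmod ((sortedClass D L T x).length - 1)).choose p (massignOf lam D L T B x)
        (chainOf D L T x) i =
      (hmod ((sortedClass D L T x).length - 1)).choose q (massignOf lam D L T B x)
        (chainOf D L T x) i := by
    intro p q hp hq hpq hagree
    have hS : ∀ r, ∀ hr : r < (sortedClass D L T x).length, p ≤ r → r ≤ q →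
        ∀ i < lam m, (sortedClass D L T x)[r] i = (sortedClass D L T x)[p] i := by
      intro r hr hpr hrq
      exact henkinBval_squeeze (hT m hm) (sortedClass_sorted hp hr hpr)
        (sortedClass_sorted hr hq hrq) hagree
    have hstep : ∀ r, p ≤ r → r + 1 ≤ q → m ≤ massignOf lam D L T B x r := by
      intro r hpr hrq
      apply Nat.le_findGreatest hm
      intro i hi
      have hr1 : r < (sortedClass D L T x).length := by omega
      have hr2 : r + 1 < (sortedClass D L T x).length := by omega
      rw [chainOf_eq hr1, chainOf_eq hr2, hS r hr1 hpr (by omega) i hi,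
        hS (r+1) hr2 (by omega) hrq i hi]
    have main : ∀ d, p + d ≤ q → ∀ i < m,
        (hmod ((sortedClass D L T x).length - 1)).choose (p + d) (massignOf lam D L T B x)
          (chainOf D L T x) i =
        (hmod ((sortedClass D L T x).length - 1)).choose p (massignOf lam D L T B x)
          (chainOf D L T x) i := by
      intro d
      induction d with
      | zero => intro _ i _; rfl
      | succ e ih =>
        intro hle i him
        have h1 := (spec.2 (p+e) (by omega)).2
        have h2 := henkinDist_le_iff.1 h1 i
          (lt_of_lt_of_le him (hstep (p+e) (by omega) (by omega)))
        have h3 := ih (by omega) i him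
        have hpe : p + (e + 1) = (p + e) + 1 := rfl
        rw [hpe, ← h2, h3]
    intro i him
    have := main (q - p) (by omega) i him
    rw [Nat.add_sub_cancel' hpq] at this
    exact this.symm
  -- apply key at the two index positions
  have hx'l : x' ∈ sortedClass D L T x := hcls ▸ self_mem_sortedClass hx'
  have hi1 : (sortedClass D L T x).idxOf x < (sortedClass D L T x).length :=
    List.idxOf_lt_length_iff.2 (self_mem_sortedClass hx)
  have hi2 : (sortedClass D L T x).idxOf x' < (sortedClass D L T x).length :=
    List.idxOf_lt_length_iff.2 hx'l
  have hg1 : (sortedClass D L T x)[(sortedClass D L T x).idxOf x] = x :=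
    List.getElem_idxOf hi1
  have hg2 : (sortedClass D L T x)[(sortedClass D L T x).idxOf x'] = x' :=
    List.getElem_idxOf hi2
  have hYx : Yfun hmod D L T B x = (hmod ((sortedClass D L T x).length - 1)).choose
      ((sortedClass D L T x).idxOf x) (massignOf lam D L T B x) (chainOf D L T x) := rfl
  have hchain : chainOf D L T x' = chainOf D L T x := by
    unfold chainOf; rw [hcls]
  have hmass : massignOf lam D L T B x' = massignOf lam D L T B x := by
    unfold massignOf; rw [hchain]
  have hYx' : Yfun hmod D L T B x' = (hmod ((sortedClass D L T x).length - 1)).choose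
      ((sortedClass D L T x).idxOf x') (massignOf lam D L T B x) (chainOf D L T x) := by
    have hgen : ∀ l₁ l₂ : List (ℕ → Bool), l₁ = l₂ → ∀ (k : ℕ) (mf : ℕ → ℕ)
        (ch : ℕ → ℕ → Bool), (hmod (l₁.length - 1)).choose k mf ch =
        (hmod (l₂.length - 1)).choose k mf ch := by
      rintro l₁ l₂ rfl _ _ _; rfl
    unfold Yfun
    rw [hmass, hchain,
      show List.idxOf x' (sortedClass D L T x') = List.idxOf x' (sortedClass D L T x) from
        by rw [hcls]]
    exact hgen _ _ hcls _ _ _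
  intro i him
  rcases le_total ((sortedClass D L T x).idxOf x) ((sortedClass D L T x).idxOf x') with
      hle | hle
  · rw [hYx, hYx']
    refine key _ _ hi1 hi2 hle ?_ i him
    intro j hj
    rw [hg1, hg2]; exact hxx' j hj
  · rw [hYx, hYx']
    refine (key _ _ hi2 hi1 hle ?_ i him).symm
    intro j hj
    rw [hg1, hg2]; exact (hxx' j hj).symm

lemma exists_good (hmod : ∀ ℓ : ℕ, IsHenkinModulus ℓ lam F) (A : Finset (ℕ → Bool)) (N : ℕ) :
    ∃ σ : ℕ × ℕ × ℕ → Bool, ∀ x ∈ A, (F x).Nonempty → ∀ m ≤ N,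
      (∃ z ∈ F x, ∀ i < m, z i = σ (m, henkinBval (lam m) x, i)) ∧
      (∀ i < m, σ (m + 1, henkinBval (lam (m+1)) x, i) = σ (m, henkinBval (lam m) x, i)) := by
  set B := N + 1 with hB
  obtain ⟨m₀, hm₀mem, hm₀min⟩ := Finset.exists_min_image (Finset.range (B+1)) lam ⟨0, by simp⟩
  set L := lam m₀ with hLdef
  set T := (Finset.range (B+1)).sup lam with hTdef
  have hLB : ∃ mm, mm ≤ B ∧ lam mm = L :=
    ⟨m₀, Nat.lt_succ_iff.1 (Finset.mem_range.1 hm₀mem), rfl⟩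
  have hL : ∀ m ≤ B, L ≤ lam m := fun m hm => hm₀min m (Finset.mem_range.2 (by omega))
  have hT : ∀ m ≤ B, lam m ≤ T := fun m hm => Finset.le_sup (Finset.mem_range.2 (by omega))
  set D := A.filter (fun x => (F x).Nonempty) with hDdef
  have hD : ∀ a ∈ D, (F a).Nonempty := fun a ha => (Finset.mem_filter.1 ha).2
  refine ⟨fun p => if h : ∃ a, a ∈ D ∧ henkinBval (lam p.1) a = p.2.1
      then Yfun hmod D L T B h.choose p.2.2 else false, ?_⟩
  intro x hxA hxF m hmN
  have hxD : x ∈ D := Finset.mem_filter.2 ⟨hxA, hxF⟩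
  have hrep : ∀ m' ≤ B, ∀ i < m',
      (if h : ∃ a, a ∈ D ∧ henkinBval (lam m') a = henkinBval (lam m') x
        then Yfun hmod D L T B h.choose i else false) = Yfun hmod D L T B x i := by
    intro m' hm' i hi
    have hex : ∃ a, a ∈ D ∧ henkinBval (lam m') a = henkinBval (lam m') x := ⟨x, hxD, rfl⟩
    rw [dif_pos hex]
    obtain ⟨haD, hkey⟩ := hex.choose_spec
    exact Yfun_agree hmod hD hLB hL hT haD hxD hm' (henkinBval_inj hkey) i hi
  constructor
  · refine ⟨Yfun hmod D L T B x, Yfun_mem hmod hD (T := T) hLB hxD, ?_⟩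
    intro i hi
    exact (hrep m (by omega) i hi).symm
  · intro i hi
    exact (hrep (m+1) (by omega) i (by omega)).trans (hrep m (by omega) i hi).symm

lemma exists_global (hmod : ∀ ℓ : ℕ, IsHenkinModulus ℓ lam F) :
    ∃ σ : ℕ × ℕ × ℕ → Bool, ∀ (x : ℕ → Bool), (F x).Nonempty → ∀ m : ℕ,
      (∃ z ∈ F x, ∀ i < m, z i = σ (m, henkinBval (lam m) x, i)) ∧
      (∀ i < m, σ (m + 1, henkinBval (lam (m+1)) x, i) = σ (m, henkinBval (lam m) x, i)) := by
  set K : Finset (ℕ → Bool) × ℕ → Set ((ℕ × ℕ × ℕ) → Bool) := fun p =>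
    {σ | ∀ x ∈ p.1, (F x).Nonempty → ∀ m ≤ p.2,
      (∃ z ∈ F x, ∀ i < m, z i = σ (m, henkinBval (lam m) x, i)) ∧
      (∀ i < m, σ (m + 1, henkinBval (lam (m+1)) x, i) = σ (m, henkinBval (lam m) x, i))}
    with hK
  have hclosed : ∀ p, IsClosed (K p) := by
    intro p
    have hrw : K p = ⋂ (x : ℕ → Bool), ⋂ (m : ℕ),
        {σ : (ℕ × ℕ × ℕ) → Bool | x ∈ p.1 ∧ (F x).Nonempty ∧ m ≤ p.2 →
          (∃ z ∈ F x, ∀ i < m, z i = σ (m, henkinBval (lam m) x, i)) ∧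
          (∀ i < m, σ (m + 1, henkinBval (lam (m+1)) x, i) = σ (m, henkinBval (lam m) x, i))} := by
      ext σ
      simp only [hK, Set.mem_setOf_eq, Set.mem_iInter]
      constructor
      · rintro h x m ⟨h1, h2, h3⟩; exact h x h1 h2 m h3
      · intro h x h1 h2 m h3; exact h x m ⟨h1, h2, h3⟩
    rw [hrw]
    refine isClosed_iInter fun x => isClosed_iInter fun m => ?_
    by_cases hg : x ∈ p.1 ∧ (F x).Nonempty ∧ m ≤ p.2
    · have hC1 : IsClosed {σ : (ℕ × ℕ × ℕ) → Bool |
          ∃ z ∈ F x, ∀ i < m, z i = σ (m, henkinBval (lam m) x, i)} := by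
        have heq : {σ : (ℕ × ℕ × ℕ) → Bool |
            ∃ z ∈ F x, ∀ i < m, z i = σ (m, henkinBval (lam m) x, i)} =
            (fun σ : (ℕ × ℕ × ℕ) → Bool => fun i : Fin m => σ (m, henkinBval (lam m) x, (i : ℕ)))
              ⁻¹' {v : Fin m → Bool | ∃ z ∈ F x, ∀ i : Fin m, z (i : ℕ) = v i} := by
          ext σ
          constructor
          · rintro ⟨z, hz, hzi⟩; exact ⟨z, hz, fun i => hzi i i.2⟩
          · rintro ⟨z, hz, hzi⟩; exact ⟨z, hz, fun i hi => hzi ⟨i, hi⟩⟩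
        rw [heq]
        exact (isClosed_discrete _).preimage (continuous_pi fun i => continuous_apply _)
      have hC2 : IsClosed {σ : (ℕ × ℕ × ℕ) → Bool |
          ∀ i < m, σ (m + 1, henkinBval (lam (m+1)) x, i) = σ (m, henkinBval (lam m) x, i)} := by
        have heq : {σ : (ℕ × ℕ × ℕ) → Bool |
            ∀ i < m, σ (m + 1, henkinBval (lam (m+1)) x, i) = σ (m, henkinBval (lam m) x, i)} =
            ⋂ i : ℕ, {σ : (ℕ × ℕ × ℕ) → Bool |
              i < m → σ (m + 1, henkinBval (lam (m+1)) x, i) = σ (m, henkinBval (lam m) x, i)} := by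
          ext σ; simp only [Set.mem_setOf_eq, Set.mem_iInter]
        rw [heq]
        refine isClosed_iInter fun i => ?_
        by_cases hi : i < m
        · have : {σ : (ℕ × ℕ × ℕ) → Bool |
              i < m → σ (m + 1, henkinBval (lam (m+1)) x, i) = σ (m, henkinBval (lam m) x, i)} =
              {σ : (ℕ × ℕ × ℕ) → Bool |
                σ (m + 1, henkinBval (lam (m+1)) x, i) = σ (m, henkinBval (lam m) x, i)} := by
            ext σ; simp [hi]
          rw [this]
          exact isClosed_eq (continuous_apply _) (continuous_apply _)
        · have : {σ : (ℕ × ℕ × ℕ) → Bool |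
              i < m → σ (m + 1, henkinBval (lam (m+1)) x, i) = σ (m, henkinBval (lam m) x, i)} =
              Set.univ := by
            ext σ; simp [hi]
          rw [this]
          exact isClosed_univ
      have : {σ : (ℕ × ℕ × ℕ) → Bool | x ∈ p.1 ∧ (F x).Nonempty ∧ m ≤ p.2 →
          (∃ z ∈ F x, ∀ i < m, z i = σ (m, henkinBval (lam m) x, i)) ∧
          (∀ i < m, σ (m + 1, henkinBval (lam (m+1)) x, i) = σ (m, henkinBval (lam m) x, i))} =
          {σ : (ℕ × ℕ × ℕ) → Bool |
            ∃ z ∈ F x, ∀ i < m, z i = σ (m, henkinBval (lam m) x, i)} ∩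
          {σ : (ℕ × ℕ × ℕ) → Bool |
            ∀ i < m, σ (m + 1, henkinBval (lam (m+1)) x, i) = σ (m, henkinBval (lam m) x, i)} := by
        ext σ; simp only [Set.mem_setOf_eq, Set.mem_inter_iff]; tauto
      rw [this]
      exact hC1.inter hC2
    · have : {σ : (ℕ × ℕ × ℕ) → Bool | x ∈ p.1 ∧ (F x).Nonempty ∧ m ≤ p.2 →
          (∃ z ∈ F x, ∀ i < m, z i = σ (m, henkinBval (lam m) x, i)) ∧
          (∀ i < m, σ (m + 1, henkinBval (lam (m+1)) x, i) = σ (m, henkinBval (lam m) x, i))} =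
          Set.univ := by
        ext σ; simp only [Set.mem_setOf_eq, Set.mem_univ, iff_true]
        intro hg'; exact absurd hg' hg
      rw [this]
      exact isClosed_univ
  have hne : ∀ p, (K p).Nonempty := by
    intro p
    obtain ⟨σ, hσ⟩ := exists_good hmod p.1 p.2
    exact ⟨σ, hσ⟩
  have hdir : Directed (· ⊇ ·) K := by
    intro p q
    refine ⟨(p.1 ∪ q.1, max p.2 q.2), ?_, ?_⟩
    · intro σ hσ x hxp hne m hm
      exact hσ x (Finset.mem_union_left _ hxp) hne m (le_trans hm (le_max_left _ _))
    · intro σ hσ x hxq hne m hm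
      exact hσ x (Finset.mem_union_right _ hxq) hne m (le_trans hm (le_max_right _ _))
  obtain ⟨σ, hσ⟩ := IsCompact.nonempty_iInter_of_directed_nonempty_isCompact_isClosed K hdir hne
    (fun p => (hclosed p).isCompact) hclosed
  refine ⟨σ, fun x hx m => ?_⟩
  have hmem : σ ∈ K ({x}, m) := Set.mem_iInter.1 hσ _
  exact hmem x (Finset.mem_singleton_self x) hx m le_rfl


/-- A multifunction on Cantor space mapping compact sets to compact sets which
admits `lam` as modulus of `ℓ`-fold Henkin-continuity for every `ℓ` has a total
selection which is uniformly continuous with modulus `lam`. -/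
theorem selection_of_omega_henkin (F : (ℕ → Bool) → Set (ℕ → Bool)) (lam : ℕ → ℕ)
    (hcpt : ∀ S : Set (ℕ → Bool), IsCompact S → IsCompact (⋃ x ∈ S, F x))
    (hmod : ∀ ℓ : ℕ, IsHenkinModulus ℓ lam F) :
    ∃ G : (ℕ → Bool) → (ℕ → Bool),
      (∀ x, (F x).Nonempty → G x ∈ F x) ∧
      (∀ x x', (F x).Nonempty → (F x').Nonempty → ∀ m : ℕ,
        dist x x' ≤ (2 : ℝ) ^ (-(lam m : ℤ)) → dist (G x) (G x') ≤ (2 : ℝ) ^ (-(m : ℤ))) := by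
  obtain ⟨σ, hσ⟩ := exists_global hmod
  have hC : ∀ x, (F x).Nonempty → ∀ m, ∀ i < m,
      σ (i + 1, henkinBval (lam (i+1)) x, i) = σ (m, henkinBval (lam m) x, i) := by
    intro x hx m
    induction m with
    | zero => exact fun i hi => absurd hi (by omega)
    | succ n ih =>
      intro i hi
      rcases Nat.lt_succ_iff_lt_or_eq.1 hi with h | h
      · rw [ih i h]
        exact ((hσ x hx n).2 i h).symm
      · subst h; rfl
  refine ⟨fun x => fun i => σ (i + 1, henkinBval (lam (i+1)) x, i), ?_, ?_⟩
  · intro x hx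
    have hFxcpt : IsCompact (F x) := by
      have := hcpt {x} isCompact_singleton
      simpa using this
    have hclosed : IsClosed (F x) := hFxcpt.isClosed
    have hclos : (fun i => σ (i + 1, henkinBval (lam (i+1)) x, i)) ∈ closure (F x) := by
      rw [Metric.mem_closure_iff]
      intro ε hε
      obtain ⟨n, hn⟩ := exists_pow_lt_of_lt_one hε (by norm_num : (1/2 : ℝ) < 1)
      obtain ⟨z, hz, hzi⟩ := (hσ x hx n).1
      refine ⟨z, hz, ?_⟩
      have hdist : dist (fun i => σ (i + 1, henkinBval (lam (i+1)) x, i)) z ≤ (2:ℝ)^(-(n:ℤ)) := by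
        refine henkinDist_le_iff.2 fun i hi => ?_
        rw [hC x hx n i hi]
        exact (hzi i hi).symm
      calc dist (fun i => σ (i + 1, henkinBval (lam (i+1)) x, i)) z
          ≤ (2:ℝ)^(-(n:ℤ)) := hdist
        _ = (1/2 : ℝ)^n := by rw [zpow_neg, zpow_natCast, one_div, inv_pow]
        _ < ε := hn
    exact hclosed.closure_subset hclos
  · intro x x' hx hx' m hdist
    have hagree : ∀ i < lam m, x i = x' i := henkinDist_le_iff.1 hdist
    have hkey : henkinBval (lam m) x = henkinBval (lam m) x' := henkinBval_congr hagree
    refine henkinDist_le_iff.2 fun i hi => ?_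
    show σ (i + 1, henkinBval (lam (i + 1)) x, i) = σ (i + 1, henkinBval (lam (i + 1)) x', i)
    rw [hC x hx m i hi, hC x' hx' m i hi, hkey]
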